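/- Let α = (α_n) be a sequence of nonnegative integers with α_n ≤ α_{n+1} and α_n ≤ n for all n, and define Q_α((x_n)) = (φ_{α_n}^n(x_{α_n}))_n. Then for every x ∈ Ĵ(Φ) and every finite nonempty S ⊆ ℕ_0, ρ(Q_α(x), S) ≤ ρ(x, {α_p : p ∈ S}). -/

import Mathlib

open Filter Topology

/-- Composition `φ_n^m = φ_{m-1} ∘ ⋯ ∘ φ_n : X n →L X m` (junk value for `m < n`). -/
noncomputable def phiTo {X : ℕ → Type*} [∀ n, NormedAddCommGroup (X n)]
    [∀ n, NormedSpace ℝ (X n)] (φ : ∀ n, X n →L[ℝ] X (n + 1)) (n : ℕ) :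
    (m : ℕ) → X n →L[ℝ] X m
  | 0 => 0
  | m + 1 =>
    if h : m + 1 = n then by rw [h]; exact ContinuousLinearMap.id ℝ (X n)
    else (φ m).comp (phiTo φ n m)

open Classical in
/-- `σ(x,S)²`: the sum over consecutive pairs `p < q` of `S` of `‖φ_p^q(x_p) - x_q‖²`. -/
noncomputable def sigma2 {X : ℕ → Type*} [∀ n, NormedAddCommGroup (X n)]
    [∀ n, NormedSpace ℝ (X n)] (φ : ∀ n, X n →L[ℝ] X (n + 1))
    (x : ∀ n, X n) (S : Finset ℕ) : ℝ :=
  ∑ p ∈ S, ∑ q ∈ S,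
    if p < q ∧ ∀ r ∈ S, ¬(p < r ∧ r < q) then ‖phiTo φ p q (x p) - x q‖ ^ 2 else 0

noncomputable def sigmaJ {X : ℕ → Type*} [∀ n, NormedAddCommGroup (X n)]
    [∀ n, NormedSpace ℝ (X n)] (φ : ∀ n, X n →L[ℝ] X (n + 1))
    (x : ∀ n, X n) (S : Finset ℕ) : ℝ :=
  Real.sqrt (sigma2 φ x S)

/-- `ρ(x,S)² = σ(x,S)² + ‖x_{max S}‖²`. -/
noncomputable def rho2 {X : ℕ → Type*} [∀ n, NormedAddCommGroup (X n)]
    [∀ n, NormedSpace ℝ (X n)] (φ : ∀ n, X n →L[ℝ] X (n + 1))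
    (x : ∀ n, X n) (S : Finset ℕ) (hS : S.Nonempty) : ℝ :=
  sigma2 φ x S + ‖x (S.max' hS)‖ ^ 2

noncomputable def rhoJ {X : ℕ → Type*} [∀ n, NormedAddCommGroup (X n)]
    [∀ n, NormedSpace ℝ (X n)] (φ : ∀ n, X n →L[ℝ] X (n + 1))
    (x : ∀ n, X n) (S : Finset ℕ) (hS : S.Nonempty) : ℝ :=
  Real.sqrt (rho2 φ x S hS)

/-- The set of values `ρ(x,S)` over finite nonempty `S ⊆ ℕ`. -/
def rhoSet {X : ℕ → Type*} [∀ n, NormedAddCommGroup (X n)]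
    [∀ n, NormedSpace ℝ (X n)] (φ : ∀ n, X n →L[ℝ] X (n + 1))
    (x : ∀ n, X n) : Set ℝ :=
  {r : ℝ | ∃ (S : Finset ℕ) (hS : S.Nonempty), r = rhoJ φ x S hS}

/-- Membership in `Ĵ(Φ)`: `sup_S ρ(x,S) < ∞`. -/
def memJhat {X : ℕ → Type*} [∀ n, NormedAddCommGroup (X n)]
    [∀ n, NormedSpace ℝ (X n)] (φ : ∀ n, X n →L[ℝ] X (n + 1))
    (x : ∀ n, X n) : Prop :=
  BddAbove (rhoSet φ x)

/-- The norm `‖x‖_J = (1/√2) sup_S ρ(x,S)`. -/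
noncomputable def normJ {X : ℕ → Type*} [∀ n, NormedAddCommGroup (X n)]
    [∀ n, NormedSpace ℝ (X n)] (φ : ∀ n, X n →L[ℝ] X (n + 1))
    (x : ∀ n, X n) : ℝ :=
  (Real.sqrt 2)⁻¹ * sSup (rhoSet φ x)

/-- Membership in `J(Φ)`: member of `Ĵ(Φ)` with `‖x_n‖ → 0`. -/
def memJ {X : ℕ → Type*} [∀ n, NormedAddCommGroup (X n)]
    [∀ n, NormedSpace ℝ (X n)] (φ : ∀ n, X n →L[ℝ] X (n + 1))
    (x : ∀ n, X n) : Prop :=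
  memJhat φ x ∧ Tendsto (fun n => ‖x n‖) atTop (𝓝 0)

open Classical in
/-- The coordinate restriction `P_I`. -/
noncomputable def restrictSeq {X : ℕ → Type*} [∀ n, NormedAddCommGroup (X n)]
    (I : Set ℕ) (x : ∀ n, X n) : ∀ n, X n :=
  fun n => if n ∈ I then x n else 0

/-- The stepping map `Q_α`. -/
noncomputable def stepSeq {X : ℕ → Type*} [∀ n, NormedAddCommGroup (X n)]
    [∀ n, NormedSpace ℝ (X n)] (φ : ∀ n, X n →L[ℝ] X (n + 1))
    (α : ℕ → ℕ) (x : ∀ n, X n) : ∀ n, X n :=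
  fun n => phiTo φ (α n) n (x (α n))

/-!
Monotonicity of `α` makes every consecutive pair `p < q` of `S` with `α p < α q` map to a
consecutive pair `α p < α q` of `α(S)`, injectively, while pairs with `α p = α q` contribute
nothing to `ρ(Q_α x, S)`. On a surviving pair, `α p ≤ α q ≤ q` and the cocycle identity
`φ_{α q}^q ∘ φ_{α p}^{α q} = φ_{α p}^q` write the `Q_α x`-jump as `φ_{α q}^q` applied to the
`x`-jump, and the maps `φ_n^m` are contractions; the same contraction bounds the last term,
since `max α(S) = α(max S)`.
-/

section phiTo

variable {X : ℕ → Type*} [∀ n, NormedAddCommGroup (X n)] [∀ n, NormedSpace ℝ (X n)]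
  (φ : ∀ n, X n →L[ℝ] X (n + 1))

lemma phiTo_succ_self (n : ℕ) :
    phiTo φ (n + 1) (n + 1) = ContinuousLinearMap.id ℝ (X (n + 1)) := by
  simp [phiTo]

lemma phiTo_succ_of_ne {n m : ℕ} (h : m + 1 ≠ n) :
    phiTo φ n (m + 1) = (φ m).comp (phiTo φ n m) := by
  simp [phiTo, h]

-- `φ_0^0` is the junk value `0`, and every later `φ_0^m` factors through it.
lemma phiTo_zero_left (m : ℕ) : phiTo φ 0 m = 0 := by
  induction m with
  | zero => rfl
  | succ m ih => rw [phiTo_succ_of_ne φ m.succ_ne_zero, ih, ContinuousLinearMap.comp_zero]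

lemma norm_phiTo_apply_le (hφ : ∀ n, ‖φ n‖ ≤ 1) (n m : ℕ) (z : X n) :
    ‖phiTo φ n m z‖ ≤ ‖z‖ := by
  induction m with
  | zero => simp [phiTo]
  | succ m ih =>
    by_cases h : m + 1 = n
    · subst h; simp [phiTo_succ_self]
    · rw [phiTo_succ_of_ne φ h, ContinuousLinearMap.comp_apply]
      exact ((φ m).le_of_opNorm_le (hφ m) _).trans (by simpa using ih)

lemma phiTo_comp_apply {n m k : ℕ} (hnm : n ≤ m) (hmk : m ≤ k) (z : X n) :
    phiTo φ m k (phiTo φ n m z) = phiTo φ n k z := by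
  cases n with
  | zero => simp [phiTo_zero_left]
  | succ n =>
    induction k, hmk using Nat.le_induction with
    | base =>
      obtain ⟨m, rfl⟩ : ∃ m', m = m' + 1 := ⟨m - 1, by omega⟩
      simp [phiTo_succ_self]
    | succ k hk ih =>
      rw [phiTo_succ_of_ne φ (by omega), phiTo_succ_of_ne φ (by omega),
        ContinuousLinearMap.comp_apply, ContinuousLinearMap.comp_apply, ih]

end phiTo

section consecutivePairs

variable {ι κ : Type*} [LinearOrder ι] [LinearOrder κ]

def consecutivePairs (S : Finset ι) : Finset (ι × ι) :=
  (S ×ˢ S).filter fun pq => pq.1 < pq.2 ∧ ∀ r ∈ S, ¬(pq.1 < r ∧ r < pq.2)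

variable {S : Finset ι} {p q : ι}

lemma mem_consecutivePairs : (p, q) ∈ consecutivePairs S ↔
    p ∈ S ∧ q ∈ S ∧ p < q ∧ ∀ r ∈ S, ¬(p < r ∧ r < q) := by
  simp [consecutivePairs, and_assoc]

lemma le_of_mem_consecutivePairs (hpq : (p, q) ∈ consecutivePairs S) {r : ι} (hr : r ∈ S)
    (hpr : p < r) : q ≤ r :=
  not_lt.mp fun hrq => (mem_consecutivePairs.mp hpq).2.2.2 r hr ⟨hpr, hrq⟩

lemma eq_of_mem_consecutivePairs {q' : ι} (hpq : (p, q) ∈ consecutivePairs S)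
    (hpq' : (p, q') ∈ consecutivePairs S) : q = q' :=
  le_antisymm (le_of_mem_consecutivePairs hpq (mem_consecutivePairs.mp hpq').2.1
      (mem_consecutivePairs.mp hpq').2.2.1)
    (le_of_mem_consecutivePairs hpq' (mem_consecutivePairs.mp hpq).2.1
      (mem_consecutivePairs.mp hpq).2.2.1)

lemma Monotone.map_mem_consecutivePairs_image [DecidableEq κ] {α : ι → κ} (hα : Monotone α)
    (hpq : (p, q) ∈ consecutivePairs S) (hlt : α p < α q) :
    (α p, α q) ∈ consecutivePairs (S.image α) := by
  obtain ⟨hp, hq, -, -⟩ := mem_consecutivePairs.mp hpq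
  refine mem_consecutivePairs.mpr
    ⟨Finset.mem_image_of_mem α hp, Finset.mem_image_of_mem α hq, hlt, ?_⟩
  rintro _ hr ⟨hpr, hrq⟩
  obtain ⟨r, hrS, rfl⟩ := Finset.mem_image.mp hr
  exact (hα (le_of_mem_consecutivePairs hpq hrS (hα.reflect_lt hpr))).not_gt hrq

-- Equal images of left endpoints force equal left endpoints: a larger one would lie beyond
-- the right endpoint of the smaller one.
lemma Monotone.injOn_map_consecutivePairs {α : ι → κ} (hα : Monotone α) :
    Set.InjOn (Prod.map α α) {pq | pq ∈ consecutivePairs S ∧ α pq.1 < α pq.2} := by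
  have key : ∀ {p q p' q'}, (p, q) ∈ consecutivePairs S → α p < α q →
      (p', q') ∈ consecutivePairs S → α p = α p' → p' ≤ p := fun hpq hlt hpq' heq =>
    not_lt.mp fun hpp' => (hα (le_of_mem_consecutivePairs hpq
      (mem_consecutivePairs.mp hpq').1 hpp')).not_gt (heq ▸ hlt)
  rintro ⟨p, q⟩ ⟨hpq, hlt⟩ ⟨p', q'⟩ ⟨hpq', hlt'⟩ heq
  obtain ⟨hp, -⟩ := Prod.ext_iff.mp heq
  obtain rfl : p = p' := le_antisymm (key hpq' hlt' hpq hp.symm) (key hpq hlt hpq' hp)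
  rw [eq_of_mem_consecutivePairs hpq hpq']

end consecutivePairs

section stepSeq

variable {X : ℕ → Type*} [∀ n, NormedAddCommGroup (X n)] [∀ n, NormedSpace ℝ (X n)]
  (φ : ∀ n, X n →L[ℝ] X (n + 1))

lemma sigma2_eq_sum_consecutivePairs (x : ∀ n, X n) (S : Finset ℕ) :
    sigma2 φ x S =
      ∑ pq ∈ consecutivePairs S, ‖phiTo φ pq.1 pq.2 (x pq.1) - x pq.2‖ ^ 2 := by
  rw [sigma2, consecutivePairs, Finset.sum_filter, Finset.sum_product]

variable {α : ℕ → ℕ} (x : ∀ n, X n) {p q : ℕ}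

lemma phiTo_stepSeq_apply (hαn : ∀ n, α n ≤ n) (hpq : p ≤ q) :
    phiTo φ p q (stepSeq φ α x p) = phiTo φ (α p) q (x (α p)) :=
  phiTo_comp_apply φ (hαn p) hpq _

lemma phiTo_stepSeq_sub_eq_zero (hαn : ∀ n, α n ≤ n) (hpq : p ≤ q) (h : α p = α q) :
    phiTo φ p q (stepSeq φ α x p) - stepSeq φ α x q = 0 := by
  rw [phiTo_stepSeq_apply φ x hαn hpq, stepSeq, h, sub_self]

lemma norm_phiTo_stepSeq_sub_le (hφ : ∀ n, ‖φ n‖ ≤ 1) (hα : Monotone α)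
    (hαn : ∀ n, α n ≤ n) (hpq : p ≤ q) :
    ‖phiTo φ p q (stepSeq φ α x p) - stepSeq φ α x q‖ ≤
      ‖phiTo φ (α p) (α q) (x (α p)) - x (α q)‖ := by
  rw [phiTo_stepSeq_apply φ x hαn hpq, stepSeq,
    ← phiTo_comp_apply φ (hα hpq) (hαn q), ← map_sub]
  exact norm_phiTo_apply_le φ hφ _ _ _

lemma sigma2_stepSeq_le (hφ : ∀ n, ‖φ n‖ ≤ 1) (hα : Monotone α) (hαn : ∀ n, α n ≤ n)
    (S : Finset ℕ) :
    sigma2 φ (stepSeq φ α x) S ≤ sigma2 φ x (S.image α) := by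
  classical
  set F : ℕ × ℕ → ℝ := fun pq => ‖phiTo φ pq.1 pq.2 (x pq.1) - x pq.2‖ ^ 2
  set A := (consecutivePairs S).filter fun pq => α pq.1 < α pq.2
  have hle : ∀ {p q}, (p, q) ∈ consecutivePairs S → p ≤ q := fun h =>
    (mem_consecutivePairs.mp h).2.2.1.le
  rw [sigma2_eq_sum_consecutivePairs, sigma2_eq_sum_consecutivePairs]
  calc _ = ∑ pq ∈ A,
          ‖phiTo φ pq.1 pq.2 (stepSeq φ α x pq.1) - stepSeq φ α x pq.2‖ ^ 2 := by
        refine (Finset.sum_filter_of_ne fun ⟨p, q⟩ hpq hne => ?_).symm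
        refine (hα (hle hpq)).lt_of_ne fun h => hne ?_
        rw [phiTo_stepSeq_sub_eq_zero φ x hαn (hle hpq) h, norm_zero, zero_pow two_ne_zero]
    _ ≤ ∑ pq ∈ A, F (Prod.map α α pq) := Finset.sum_le_sum fun ⟨p, q⟩ hpq =>
        pow_le_pow_left₀ (norm_nonneg _)
          (norm_phiTo_stepSeq_sub_le φ x hφ hα hαn (hle (Finset.mem_filter.mp hpq).1)) 2
    _ = ∑ pq ∈ A.image (Prod.map α α), F pq :=
        (Finset.sum_image fun a ha b hb h => hα.injOn_map_consecutivePairs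
          (Finset.mem_filter.mp ha) (Finset.mem_filter.mp hb) h).symm
    _ ≤ ∑ pq ∈ consecutivePairs (S.image α), F pq := by
        refine Finset.sum_le_sum_of_subset_of_nonneg ?_ fun _ _ _ => sq_nonneg _
        intro _ h
        obtain ⟨⟨p, q⟩, hpq, rfl⟩ := Finset.mem_image.mp h
        exact hα.map_mem_consecutivePairs_image (Finset.mem_filter.mp hpq).1
          (Finset.mem_filter.mp hpq).2

end stepSeq

theorem stmt10_general {X : ℕ → Type*} [∀ n, NormedAddCommGroup (X n)] [∀ n, NormedSpace ℝ (X n)]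
    (φ : ∀ n, X n →L[ℝ] X (n + 1)) (hφ : ∀ n, ‖φ n‖ ≤ 1)
    (α : ℕ → ℕ) (hα : Monotone α) (hαn : ∀ n, α n ≤ n)
    (x : ∀ n, X n)
    (S : Finset ℕ) (hS : S.Nonempty) :
    rhoJ φ (stepSeq φ α x) S hS ≤ rhoJ φ x (S.image α) (hS.image α) := by
  refine Real.sqrt_le_sqrt (add_le_add (sigma2_stepSeq_le φ x hφ hα hαn S) ?_)
  rw [Finset.max'_image hα]
  exact pow_le_pow_left₀ (norm_nonneg _) (norm_phiTo_apply_le φ hφ _ _ _) 2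

/-- for a nondecreasing `α` with `α_n ≤ n`,
`ρ(Q_α(x), S) ≤ ρ(x, α(S))` for every `x ∈ Ĵ(Φ)` and finite nonempty `S`. -/
theorem stmt10 {X : ℕ → Type*} [∀ n, NormedAddCommGroup (X n)] [∀ n, NormedSpace ℝ (X n)]
    [∀ n, CompleteSpace (X n)] [Subsingleton (X 0)]
    (φ : ∀ n, X n →L[ℝ] X (n + 1)) (hφ : ∀ n, ‖φ n‖ ≤ 1)
    (α : ℕ → ℕ) (hα : Monotone α) (hαn : ∀ n, α n ≤ n)
    (x : ∀ n, X n) (hx : memJhat φ x)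
    (S : Finset ℕ) (hS : S.Nonempty) :
    rhoJ φ (stepSeq φ α x) S hS ≤ rhoJ φ x (S.image α) (hS.image α) :=
  stmt10_general φ hφ α hα hαn x S hS
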